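/- Let f : ℝ^d → ℝ be μ-strongly convex, let g = (g_1, …, g_q) : ℝ^d → ℝ^q be componentwise convex, let A ∈ ℝ^{p×d}, b, v, v*, p̂ ∈ ℝ^p, z, z* ∈ ℝ^q, q̂ ∈ ℝ^q, ρ > 0. Define the dual function φ(u, y) = min_x [f(x) + ⟨u, A x − b − v*⟩ + ⟨y, g(x) − z*⟩] on ℝ^p × ℝ^q_{≥0}, and set ξ = (v − v*, z − z*) ∈ ℝ^{p+q}. Suppose x⁺ minimizes the augmented Lagrangian x ↦ f(x) + ⟨p̂, A x − b − v⟩ + (ρ/2)‖A x − b − v‖² + (1/(2ρ))‖[q̂ + ρ(g(x) − z)]_+‖² − (1/(2ρ))‖q̂‖², and set u⁺ = p̂ + ρ(A x⁺ − b − v), y⁺ = [q̂ + ρ(g(x⁺) − z)]_+. Then ζ⁺ = (u⁺, y⁺) is the unique minimizer over ζ ∈ ℝ^p × ℝ^q_{≥0} of ζ ↦ ⟨ξ, ζ⟩ − φ(ζ) + (1/(2ρ))‖ζ − (p̂, q̂)‖². -/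

import Mathlib

open RealInnerProductSpace Finset

/-!
Write `r⁺ = A x⁺ - b - v` and `s⁺ = g x⁺ - z`. The two penalty terms of the augmented
Lagrangian are `ρ`-smooth convex functions of `A x - b - v` and `g x - z` (the second one
nondecreasing) with gradients `u⁺` and `y⁺` at `x⁺`. Comparing along segments issuing from `x⁺`
shows that `x⁺` minimizes the ordinary Lagrangian at `ζ⁺ = (u⁺, y⁺)`, so `φ ζ⁺ = L(ζ⁺, x⁺)`,
while `φ ζ ≤ L(ζ, x⁺)` for all `ζ`. Hence, up to a constant, the dual objective dominates
`ζ ↦ -⟪ζ, (r⁺, s⁺)⟫ + ‖ζ - (p̂, q̂)‖² / (2ρ)`, with equality at `ζ⁺`. Since `ζ⁺` is the projection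
of `(p̂, q̂) + ρ (r⁺, s⁺)` onto `ℝ^p × ℝ^q_{≥0}`, it minimizes this function with quadratic growth
`‖ζ - ζ⁺‖² / (2ρ)`.
-/

/-- Componentwise projection onto the nonnegative orthant of `ℝ^q`. -/
noncomputable def posPart {q : ℕ} (w : EuclideanSpace ℝ (Fin q)) : EuclideanSpace ℝ (Fin q) :=
  WithLp.toLp 2 (fun l => max (w l) 0)

/-- The Lagrangian `x ↦ f x + ⟪u, A x − b − v*⟫ + ⟪y, g x − z*⟫` at `ζ = (u, y)`. -/
noncomputable def lagrangian {d p q : ℕ}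
    (f : EuclideanSpace ℝ (Fin d) → ℝ)
    (g : EuclideanSpace ℝ (Fin d) → EuclideanSpace ℝ (Fin q))
    (A : EuclideanSpace ℝ (Fin d) →L[ℝ] EuclideanSpace ℝ (Fin p))
    (b vstar : EuclideanSpace ℝ (Fin p)) (zstar : EuclideanSpace ℝ (Fin q))
    (ζ : EuclideanSpace ℝ (Fin p) × EuclideanSpace ℝ (Fin q))
    (x : EuclideanSpace ℝ (Fin d)) : ℝ :=
  f x + ⟪ζ.1, A x - b - vstar⟫ + ⟪ζ.2, g x - zstar⟫

lemma nonneg_of_forall_add_mul_nonneg {Δ K : ℝ} (h : ∀ t : ℝ, 0 < t → t ≤ 1 → 0 ≤ Δ + t * K) :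
    0 ≤ Δ := by
  have hlim : Filter.Tendsto (fun t : ℝ => Δ + t * K) (nhdsWithin 0 (Set.Ioi 0)) (nhds Δ) :=
    ((by fun_prop : Continuous fun t : ℝ => Δ + t * K).tendsto' 0 Δ (by simp)).mono_left
      nhdsWithin_le_nhds
  refine ge_of_tendsto hlim ?_
  filter_upwards [Ioc_mem_nhdsGT (zero_lt_one' ℝ)] with t ht using h t ht.1 ht.2

section InnerProductSpace

variable {E : Type*} [NormedAddCommGroup E] [InnerProductSpace ℝ E]

lemma norm_add_smul_sq (a δ : E) (c : ℝ) :
    ‖a + c • δ‖ ^ 2 = ‖a‖ ^ 2 + 2 * c * ⟪a, δ⟫ + c ^ 2 * ‖δ‖ ^ 2 := by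
  rw [norm_add_sq_real, real_inner_smul_right, norm_smul, mul_pow, Real.norm_eq_abs, sq_abs]
  ring

lemma ConvexOn.apply_segment_le {φ : E → ℝ} (hφ : ConvexOn ℝ Set.univ φ) (x y : E) {t : ℝ}
    (ht0 : 0 ≤ t) (ht1 : t ≤ 1) : φ ((1 - t) • x + t • y) ≤ φ x + t * (φ y - φ x) := by
  have := hφ.2 (Set.mem_univ x) (Set.mem_univ y) (sub_nonneg.2 ht1) ht0 (sub_add_cancel 1 t)
  simp only [smul_eq_mul] at this
  linarith

/-- Up to a constant, `-⟪c, s⟫ + ‖c - ŵ‖² / (2ρ)` is `‖c - (ŵ + ρ s)‖² / (2ρ)`. -/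
lemma neg_inner_add_norm_sub_sq_le {ρ : ℝ} (hρ : 0 < ρ) {c m ŵ s : E}
    (h : ‖c - m‖ ^ 2 + ‖m - (ŵ + ρ • s)‖ ^ 2 ≤ ‖c - (ŵ + ρ • s)‖ ^ 2) :
    -⟪m, s⟫ + 1 / (2 * ρ) * ‖m - ŵ‖ ^ 2 + 1 / (2 * ρ) * ‖c - m‖ ^ 2
      ≤ -⟪c, s⟫ + 1 / (2 * ρ) * ‖c - ŵ‖ ^ 2 := by
  have key : ∀ c : E, -⟪c, s⟫ + 1 / (2 * ρ) * ‖c - ŵ‖ ^ 2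
      = 1 / (2 * ρ) * ‖c - (ŵ + ρ • s)‖ ^ 2 - ⟪ŵ, s⟫ - ρ / 2 * ‖s‖ ^ 2 := by
    intro c
    rw [← sub_sub, sub_eq_add_neg _ (ρ • s), ← neg_smul, norm_add_smul_sq, inner_sub_left]
    field_simp
    ring
  rw [key, key]
  linarith [mul_le_mul_of_nonneg_left h (by positivity : (0 : ℝ) ≤ 1 / (2 * ρ))]

end InnerProductSpace

lemma norm_sub_sq_add_norm_sub_sq_pos {E F : Type*} [NormedAddCommGroup E]
    [NormedAddCommGroup F] {u u' : E} {y y' : F} (h : (u, y) ≠ (u', y')) :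
    0 < ‖u - u'‖ ^ 2 + ‖y - y'‖ ^ 2 := by
  rw [Ne, Prod.mk_inj, not_and_or] at h
  rcases h with h | h
  · exact add_pos_of_pos_of_nonneg (pow_pos (norm_sub_pos_iff.2 h) 2) (sq_nonneg _)
  · exact add_pos_of_nonneg_of_pos (sq_nonneg _) (pow_pos (norm_sub_pos_iff.2 h) 2)

lemma max_zero_sq_le_add_sq {w a δ : ℝ} (h : w ≤ a + δ) : max w 0 ^ 2 ≤ (max a 0 + δ) ^ 2 := by
  rcases le_total w 0 with hw | hw
  · simpa [max_eq_right hw] using sq_nonneg (max a 0 + δ)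
  · rw [max_eq_left hw]
    exact pow_le_pow_left₀ hw (h.trans (by gcongr; exact le_max_left a 0)) 2

section posPart

variable {q : ℕ}

@[simp]
lemma posPart_apply (w : EuclideanSpace ℝ (Fin q)) (l : Fin q) : posPart w l = max (w l) 0 :=
  rfl

lemma norm_posPart_sq_le {w a δ : EuclideanSpace ℝ (Fin q)} (h : ∀ l, w l ≤ a l + δ l) :
    ‖posPart w‖ ^ 2 ≤ ‖posPart a + δ‖ ^ 2 := by
  simp only [EuclideanSpace.norm_sq_eq, Real.norm_eq_abs, sq_abs, PiLp.add_apply, posPart_apply]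
  exact Finset.sum_le_sum fun l _ => max_zero_sq_le_add_sq (h l)

lemma norm_sub_posPart_sq_add_le {y w : EuclideanSpace ℝ (Fin q)} (hy : ∀ l, 0 ≤ y l) :
    ‖y - posPart w‖ ^ 2 + ‖posPart w - w‖ ^ 2 ≤ ‖y - w‖ ^ 2 := by
  have hinner : 0 ≤ ⟪y - posPart w, posPart w - w⟫ := by
    simp only [PiLp.inner_apply, PiLp.sub_apply, posPart_apply, Real.inner_apply]
    refine Finset.sum_nonneg fun l _ => ?_
    rcases le_total (w l) 0 with hw | hw
    · rw [max_eq_right hw, sub_zero, zero_sub]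
      exact mul_nonneg (hy l) (neg_nonneg.2 hw)
    · simp [max_eq_left hw]
  have := norm_add_sq_real (y - posPart w) (posPart w - w)
  rw [sub_add_sub_cancel] at this
  linarith

end posPart

section AugmentedLagrangian

variable {d p q : ℕ} (f : EuclideanSpace ℝ (Fin d) → ℝ)
  (g : EuclideanSpace ℝ (Fin d) → EuclideanSpace ℝ (Fin q))
  (A : EuclideanSpace ℝ (Fin d) →L[ℝ] EuclideanSpace ℝ (Fin p))
  (b v phat : EuclideanSpace ℝ (Fin p)) (z qhat : EuclideanSpace ℝ (Fin q)) (ρ : ℝ)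

noncomputable def augLagrangian (x : EuclideanSpace ℝ (Fin d)) : ℝ :=
  f x + ⟪phat, A x - b - v⟫ + ρ / 2 * ‖A x - b - v‖ ^ 2
    + 1 / (2 * ρ) * ‖posPart (qhat + ρ • (g x - z))‖ ^ 2 - 1 / (2 * ρ) * ‖qhat‖ ^ 2

variable {f g ρ}

/-- The penalties are `ρ`-smooth with gradients `p̂ + ρ (A x₀ - b - v)` and
`[q̂ + ρ (g x₀ - z)]₊` at `x₀`, and `[·]₊` is monotone. -/
lemma augLagrangian_segment_le (hρ : 0 < ρ) (hf : ConvexOn ℝ Set.univ f)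
    (hg : ∀ l, ConvexOn ℝ Set.univ fun x => g x l) (x₀ x : EuclideanSpace ℝ (Fin d)) {t : ℝ}
    (ht0 : 0 ≤ t) (ht1 : t ≤ 1) :
    augLagrangian f g A b v phat z qhat ρ ((1 - t) • x₀ + t • x)
      ≤ augLagrangian f g A b v phat z qhat ρ x₀
        + t * (f x - f x₀ + ⟪phat + ρ • (A x₀ - b - v), A x - A x₀⟫
          + ⟪posPart (qhat + ρ • (g x₀ - z)), g x - g x₀⟫)
        + t ^ 2 * (ρ / 2 * (‖A x - A x₀‖ ^ 2 + ‖g x - g x₀‖ ^ 2)) := by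
  set xt := (1 - t) • x₀ + t • x
  set r := A x₀ - b - v
  set y := posPart (qhat + ρ • (g x₀ - z))
  have hfx : f xt ≤ f x₀ + t * (f x - f x₀) := hf.apply_segment_le x₀ x ht0 ht1
  have hAx : A xt - b - v = r + t • (A x - A x₀) := by
    simp only [xt, r, map_add, map_smul]
    module
  have hgx : ‖posPart (qhat + ρ • (g xt - z))‖ ^ 2 ≤ ‖y + (ρ * t) • (g x - g x₀)‖ ^ 2 := by
    refine norm_posPart_sq_le fun l => ?_
    have := (hg l).apply_segment_le x₀ x ht0 ht1
    simp only [PiLp.add_apply, PiLp.smul_apply, PiLp.sub_apply, smul_eq_mul]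
    nlinarith
  have := mul_le_mul_of_nonneg_left hgx (by positivity : (0 : ℝ) ≤ 1 / (2 * ρ))
  simp only [augLagrangian, hAx, norm_add_smul_sq, inner_add_right, inner_add_left,
    real_inner_smul_right, real_inner_smul_left] at this ⊢
  field_simp at this ⊢
  linarith [mul_le_mul_of_nonneg_left hfx (by positivity : (0 : ℝ) ≤ 2 * ρ)]

lemma lagrangian_le_of_forall_augLagrangian_le (hρ : 0 < ρ) (hf : ConvexOn ℝ Set.univ f)
    (hg : ∀ l, ConvexOn ℝ Set.univ fun x => g x l) (vstar : EuclideanSpace ℝ (Fin p))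
    (zstar : EuclideanSpace ℝ (Fin q)) {x₀ : EuclideanSpace ℝ (Fin d)}
    (hx₀ : ∀ w, augLagrangian f g A b v phat z qhat ρ x₀ ≤ augLagrangian f g A b v phat z qhat ρ w)
    (x : EuclideanSpace ℝ (Fin d)) :
    lagrangian f g A b vstar zstar (phat + ρ • (A x₀ - b - v), posPart (qhat + ρ • (g x₀ - z))) x₀
      ≤ lagrangian f g A b vstar zstar
          (phat + ρ • (A x₀ - b - v), posPart (qhat + ρ • (g x₀ - z))) x := by
  set u := phat + ρ • (A x₀ - b - v)
  set y := posPart (qhat + ρ • (g x₀ - z))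
  have hΔ : 0 ≤ f x - f x₀ + ⟪u, A x - A x₀⟫ + ⟪y, g x - g x₀⟫ := by
    refine nonneg_of_forall_add_mul_nonneg (K := ρ / 2 * (‖A x - A x₀‖ ^ 2 + ‖g x - g x₀‖ ^ 2))
      fun t ht0 ht1 => (mul_nonneg_iff_of_pos_left ht0).1 ?_
    have := augLagrangian_segment_le A b v phat z qhat hρ hf hg x₀ x ht0.le ht1
    linarith [hx₀ ((1 - t) • x₀ + t • x)]
  have hA : A x - b - vstar = (A x₀ - b - vstar) + (A x - A x₀) := by abel
  have hg' : g x - zstar = (g x₀ - zstar) + (g x - g x₀) := by abel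
  simp only [lagrangian, hA, hg', inner_add_right]
  linarith

end AugmentedLagrangian

lemma inner_sub_lagrangian {d p q : ℕ} (f : EuclideanSpace ℝ (Fin d) → ℝ)
    (g : EuclideanSpace ℝ (Fin d) → EuclideanSpace ℝ (Fin q))
    (A : EuclideanSpace ℝ (Fin d) →L[ℝ] EuclideanSpace ℝ (Fin p))
    (b v vstar : EuclideanSpace ℝ (Fin p)) (z zstar : EuclideanSpace ℝ (Fin q))
    (u : EuclideanSpace ℝ (Fin p)) (y : EuclideanSpace ℝ (Fin q)) (x : EuclideanSpace ℝ (Fin d)) :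
    ⟪v - vstar, u⟫ + ⟪z - zstar, y⟫ - lagrangian f g A b vstar zstar (u, y) x
      = -(f x + ⟪u, A x - b - v⟫ + ⟪y, g x - z⟫) := by
  have hA : A x - b - vstar = (A x - b - v) + (v - vstar) := by abel
  have hg : g x - zstar = (g x - z) + (z - zstar) := by abel
  simp only [lagrangian, hA, hg, inner_add_right, real_inner_comm u, real_inner_comm y]
  ring

/-- The augmented Lagrangian step equals a proximal maximization step on the
dual function: if `x⁺` minimizes the augmented Lagrangian and `u⁺ = p̂ + ρ(A x⁺ − b − v)`,
`y⁺ = [q̂ + ρ(g(x⁺) − z)]₊`, then `ζ⁺ = (u⁺, y⁺)` is the unique minimizer over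
`ℝ^p × ℝ^q_{≥0}` of `ζ ↦ ⟪ξ, ζ⟫ − φ(ζ) + (1/(2ρ))‖ζ − (p̂, q̂)‖²`, where
`ξ = (v − v*, z − z*)` and `φ(ζ) = min_x [f x + ⟪u, A x − b − v*⟫ + ⟪y, g x − z*⟫]`. -/
theorem augmented_lagrangian_step_is_dual_proximal_step
    (d p q : ℕ) (μ ρ : ℝ) (hμ : 0 < μ) (hρ : 0 < ρ)
    (f : EuclideanSpace ℝ (Fin d) → ℝ)
    (hf : ConvexOn ℝ Set.univ (fun x => f x - μ / 2 * ‖x‖ ^ 2))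
    (g : EuclideanSpace ℝ (Fin d) → EuclideanSpace ℝ (Fin q))
    (hg : ∀ l, ConvexOn ℝ Set.univ (fun x => g x l))
    (A : EuclideanSpace ℝ (Fin d) →L[ℝ] EuclideanSpace ℝ (Fin p))
    (b v vstar phat : EuclideanSpace ℝ (Fin p))
    (z zstar qhat : EuclideanSpace ℝ (Fin q))
    (D : Set (EuclideanSpace ℝ (Fin p) × EuclideanSpace ℝ (Fin q)))
    (hD : D = {ζ | ∀ l, 0 ≤ ζ.2 l})
    -- `xm` selects, for each admissible `ζ`, a minimizer of the ordinary Lagrangian,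
    -- so that `φ ζ = lagrangian f g A b vstar zstar ζ (xm ζ)` is the dual function
    (xm : (EuclideanSpace ℝ (Fin p) × EuclideanSpace ℝ (Fin q)) → EuclideanSpace ℝ (Fin d))
    (hxm : ∀ ζ ∈ D, ∀ w,
      lagrangian f g A b vstar zstar ζ (xm ζ) ≤ lagrangian f g A b vstar zstar ζ w)
    (xplus : EuclideanSpace ℝ (Fin d))
    (hxplus : ∀ w : EuclideanSpace ℝ (Fin d),
      f xplus + ⟪phat, A xplus - b - v⟫ + ρ / 2 * ‖A xplus - b - v‖ ^ 2
          + 1 / (2 * ρ) * ‖posPart (qhat + ρ • (g xplus - z))‖ ^ 2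
          - 1 / (2 * ρ) * ‖qhat‖ ^ 2
        ≤ f w + ⟪phat, A w - b - v⟫ + ρ / 2 * ‖A w - b - v‖ ^ 2
          + 1 / (2 * ρ) * ‖posPart (qhat + ρ • (g w - z))‖ ^ 2
          - 1 / (2 * ρ) * ‖qhat‖ ^ 2)
    (uplus : EuclideanSpace ℝ (Fin p)) (yplus : EuclideanSpace ℝ (Fin q))
    (huplus : uplus = phat + ρ • (A xplus - b - v))
    (hyplus : yplus = posPart (qhat + ρ • (g xplus - z))) :
    (uplus, yplus) ∈ D ∧
    ∀ ζ ∈ D, ζ ≠ (uplus, yplus) →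
      ⟪v - vstar, uplus⟫ + ⟪z - zstar, yplus⟫
          - lagrangian f g A b vstar zstar (uplus, yplus) (xm (uplus, yplus))
          + 1 / (2 * ρ) * (‖uplus - phat‖ ^ 2 + ‖yplus - qhat‖ ^ 2)
        < ⟪v - vstar, ζ.1⟫ + ⟪z - zstar, ζ.2⟫
          - lagrangian f g A b vstar zstar ζ (xm ζ)
          + 1 / (2 * ρ) * (‖ζ.1 - phat‖ ^ 2 + ‖ζ.2 - qhat‖ ^ 2) := by
  have hmem : (uplus, yplus) ∈ D := by simp [hD, hyplus]
  refine ⟨hmem, fun ⟨u, y⟩ hζ hne => ?_⟩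
  have hconv : ConvexOn ℝ Set.univ f :=
    ((strongConvexOn_iff_convex.2 hf).strictConvexOn hμ).convexOn
  have hφplus : lagrangian f g A b vstar zstar (uplus, yplus) (xm (uplus, yplus))
      = lagrangian f g A b vstar zstar (uplus, yplus) xplus := by
    refine le_antisymm (hxm _ hmem xplus) ?_
    subst huplus hyplus
    exact lagrangian_le_of_forall_augLagrangian_le A b v phat z qhat hρ hconv hg vstar zstar
      hxplus _
  have hφ := hxm (u, y) hζ xplus
  have hy0 : ∀ l, 0 ≤ y l := by simpa [hD] using hζ
  have hu := neg_inner_add_norm_sub_sq_le hρ (c := u) (m := uplus) (ŵ := phat)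
    (s := A xplus - b - v) (by simp [huplus])
  have hy := neg_inner_add_norm_sub_sq_le hρ (c := y) (m := yplus) (ŵ := qhat)
    (s := g xplus - z) (hyplus ▸ norm_sub_posPart_sq_add_le hy0)
  have hgap := mul_pos (one_div_pos.2 (mul_pos two_pos hρ)) (norm_sub_sq_add_norm_sub_sq_pos hne)
  have hplus := inner_sub_lagrangian f g A b v vstar z zstar uplus yplus xplus
  have hζxplus := inner_sub_lagrangian f g A b v vstar z zstar u y xplus
  rw [hφplus]
  dsimp only
  linarith
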